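/- arXiv:1705.08219 — 5 statements merged into one kernel-verified Lean document; each statement's English description precedes it below -/
import Mathlib

section
/- Let g₁,…,g_m : ℝⁿ → ℝ be differentiable, x a feasible point of C = [g₁ ≤ 0,…,g_m ≤ 0], and I(x) the set of active indices. Then there exists y ∈ ℝⁿ with ⟨y, ∇g_i(x)⟩ < 0 for all i ∈ I(x) if and only if 0 ∉ conv{∇g_i(x) | i ∈ I(x)}. -/
open RealInnerProductSpace

/-! Both sides say that the finitely many active gradients can be strictly separated from `0`:
a direction `y` with `⟪y, v⟫ < 0` on them puts their whole convex hull in the open half-space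
`⟪y, ·⟫ < 0`, which misses `0`; conversely the convex hull of a finite set is compact, so if it
misses `0`, Hahn–Banach separates it strictly from `0` by a functional, represented by some `y`
via Riesz. -/

theorem exists_strongDual_neg_iff_zero_notMem_convexHull {E : Type*} [TopologicalSpace E]
    [AddCommGroup E] [Module ℝ E] [IsTopologicalAddGroup E] [ContinuousSMul ℝ E]
    [LocallyConvexSpace ℝ E] [T2Space E] {S : Set E} (hS : S.Finite) :
    (∃ f : StrongDual ℝ E, ∀ v ∈ S, f v < 0) ↔ (0 : E) ∉ convexHull ℝ S := by
  constructor
  · rintro ⟨f, hf⟩ h0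
    have hull_neg : convexHull ℝ S ⊆ {v | f v < 0} :=
      convexHull_min hf (convex_halfSpace_lt f.isLinear 0)
    simpa using hull_neg h0
  · intro h0
    obtain ⟨f, u, hf_lt, hu⟩ := geometric_hahn_banach_closed_point (convex_convexHull ℝ S)
      (hS.isClosed_convexHull ℝ) h0
    rw [map_zero] at hu
    exact ⟨f, fun v hv => (hf_lt v (subset_convexHull ℝ S hv)).trans hu⟩

theorem exists_inner_neg_iff_zero_notMem_convexHull {E : Type*} [NormedAddCommGroup E]
    [InnerProductSpace ℝ E] [CompleteSpace E] {S : Set E} (hS : S.Finite) :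
    (∃ y : E, ∀ v ∈ S, ⟪y, v⟫ < 0) ↔ (0 : E) ∉ convexHull ℝ S := by
  rw [← exists_strongDual_neg_iff_zero_notMem_convexHull hS]
  constructor
  · rintro ⟨y, hy⟩
    exact ⟨innerSL ℝ y, hy⟩
  · rintro ⟨f, hf⟩
    obtain ⟨y, rfl⟩ := (InnerProductSpace.toDual ℝ E).surjective f
    exact ⟨y, fun v hv => by simpa using hf v hv⟩

theorem stmt1_general {n m : ℕ} (g : Fin m → EuclideanSpace ℝ (Fin n) → ℝ)
    (x : EuclideanSpace ℝ (Fin n)) :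
    (∃ y : EuclideanSpace ℝ (Fin n), ∀ i, g i x = 0 → ⟪y, gradient (g i) x⟫ < 0) ↔
      (0 : EuclideanSpace ℝ (Fin n)) ∉
        convexHull ℝ ((fun i => gradient (g i) x) '' {i | g i x = 0}) := by
  rw [← exists_inner_neg_iff_zero_notMem_convexHull (Set.toFinite _)]
  simp only [Set.forall_mem_image, Set.mem_ofPred_eq]

theorem stmt1 {n m : ℕ} (g : Fin m → EuclideanSpace ℝ (Fin n) → ℝ)
    (hg : ∀ i, Differentiable ℝ (g i)) (x : EuclideanSpace ℝ (Fin n))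
    (hx : ∀ i, g i x ≤ 0) :
    (∃ y : EuclideanSpace ℝ (Fin n), ∀ i, g i x = 0 → ⟪y, gradient (g i) x⟫ < 0) ↔
      (0 : EuclideanSpace ℝ (Fin n)) ∉
        convexHull ℝ ((fun i => gradient (g i) x) '' {i | g i x = 0}) :=
  stmt1_general g x
end

section
/- Let g₁,…,g_m, h₁,…,h_r : ℝⁿ → ℝ be differentiable, and x a point with g_i(x) ≤ 0 and h_j(x) = 0 for all i, j. Then there exists y ∈ ℝⁿ satisfying ⟨y, ∇h_j(x)⟩ = 0 for all j and ⟨y, ∇g_i(x)⟩ < 0 for all active i ∈ I(x), if and only if conv{∇g_i(x) | i ∈ I(x)} ∩ span{∇h_j(x) | 1 ≤ j ≤ r} = ∅. -/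
/-!
Both sides are statements about the finite set `A` of active gradients and the subspace `S`
spanned by the equality gradients. If `y ⟂ S` and `⟪y, a⟫ < 0` on `A`, the open half-space
`{v | ⟪y, v⟫ < 0}` contains `conv A` and misses `S`. Conversely, `conv A` is compact and `S` is
closed, so a continuous functional strictly separates them; being bounded below on the subspace
`S`, it vanishes there, and it is negative on `A` because `0 ∈ S`. Its Riesz representative is
the required direction `y`.
-/

open RealInnerProductSpace

section Separation

variable {E F : Type*} [AddCommGroup E] [Module ℝ E] [FunLike F E ℝ] [LinearMapClass F ℝ E ℝ]

theorem apply_eq_zero_of_forall_lt_apply {f : F} {S : Submodule ℝ E} {c : ℝ}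
    (hf : ∀ s ∈ S, c < f s) {s : E} (hs : s ∈ S) : f s = 0 := by
  by_contra hfs
  have := hf ((c / f s) • s) (S.smul_mem _ hs)
  rw [map_smul, smul_eq_mul, div_mul_cancel₀ _ hfs] at this
  exact lt_irrefl _ this

theorem disjoint_convexHull_of_forall_apply_neg {f : F} {A : Set E} {S : Submodule ℝ E}
    (hS : ∀ s ∈ S, f s = 0) (hA : ∀ a ∈ A, f a < 0) : Disjoint (convexHull ℝ A) S := by
  have hHull : convexHull ℝ A ⊆ {v | f v < 0} :=
    convexHull_min hA (convex_halfSpace_lt (f : E →ₗ[ℝ] ℝ).isLinear 0)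
  exact Set.disjoint_left.mpr fun v hvA hvS => (hHull hvA).ne (hS v hvS)

variable [TopologicalSpace E] [IsTopologicalAddGroup E] [ContinuousSMul ℝ E]
  [LocallyConvexSpace ℝ E]

theorem exists_forall_apply_neg_of_disjoint_convexHull {A : Set E} (hA : A.Finite)
    {S : Submodule ℝ E} (hS : IsClosed (S : Set E)) (hdisj : Disjoint (convexHull ℝ A) S) :
    ∃ f : StrongDual ℝ E, (∀ s ∈ S, f s = 0) ∧ ∀ a ∈ A, f a < 0 := by
  obtain ⟨f, u, v, hfA, huv, hfS⟩ := geometric_hahn_banach_compact_closed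
    (convex_convexHull ℝ A) (hA.isCompact_convexHull ℝ) S.convex hS hdisj
  have hv : v < 0 := by simpa using hfS 0 S.zero_mem
  exact ⟨f, fun s hs => apply_eq_zero_of_forall_lt_apply hfS hs,
    fun a ha => (hfA a (subset_convexHull ℝ A ha)).trans (huv.trans hv)⟩

end Separation

section InnerProductSpace

variable {E : Type*} [NormedAddCommGroup E] [InnerProductSpace ℝ E]

theorem Submodule.mem_orthogonal_span_range_iff {ι : Type*} (v : ι → E) (y : E) :
    y ∈ (span ℝ (Set.range v))ᗮ ↔ ∀ j, ⟪y, v j⟫ = 0 := by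
  have hker : y ∈ (span ℝ (Set.range v))ᗮ ↔
      span ℝ (Set.range v) ≤ LinearMap.ker (innerₛₗ ℝ y) := by
    simp [mem_orthogonal', SetLike.le_def]
  rw [hker, span_le, Set.range_subset_iff]
  simp

theorem exists_mem_orthogonal_inner_neg_iff_disjoint_convexHull [CompleteSpace E] {A : Set E}
    (hA : A.Finite) {S : Submodule ℝ E} (hS : IsClosed (S : Set E)) :
    (∃ y ∈ Sᗮ, ∀ a ∈ A, ⟪y, a⟫ < 0) ↔ Disjoint (convexHull ℝ A) S := by
  constructor
  · rintro ⟨y, hyS, hyA⟩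
    exact disjoint_convexHull_of_forall_apply_neg (f := innerSL ℝ y)
      (by simpa [Submodule.mem_orthogonal'] using hyS) (by simpa using hyA)
  · intro hdisj
    obtain ⟨f, hfS, hfA⟩ := exists_forall_apply_neg_of_disjoint_convexHull hA hS hdisj
    refine ⟨(InnerProductSpace.toDual ℝ E).symm f, ?_, ?_⟩
    · simpa [Submodule.mem_orthogonal', InnerProductSpace.toDual_symm_apply] using hfS
    · simpa [InnerProductSpace.toDual_symm_apply] using hfA

end InnerProductSpace

theorem stmt2_general {n m r : ℕ} (g : Fin m → EuclideanSpace ℝ (Fin n) → ℝ)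
    (h : Fin r → EuclideanSpace ℝ (Fin n) → ℝ)
    (x : EuclideanSpace ℝ (Fin n)) :
    (∃ y : EuclideanSpace ℝ (Fin n),
        (∀ j, ⟪y, gradient (h j) x⟫ = 0) ∧
        ∀ i, g i x = 0 → ⟪y, gradient (g i) x⟫ < 0) ↔
      convexHull ℝ ((fun i => gradient (g i) x) '' {i | g i x = 0}) ∩
        (Submodule.span ℝ (Set.range fun j => gradient (h j) x) :
          Set (EuclideanSpace ℝ (Fin n))) = ∅ := by
  rw [← Set.disjoint_iff_inter_eq_empty,
    ← exists_mem_orthogonal_inner_neg_iff_disjoint_convexHull ((Set.toFinite _).image _)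
      (Submodule.closed_of_finiteDimensional _)]
  simp only [Submodule.mem_orthogonal_span_range_iff, Set.forall_mem_image, Set.mem_ofPred_eq]

theorem stmt2 {n m r : ℕ} (g : Fin m → EuclideanSpace ℝ (Fin n) → ℝ)
    (h : Fin r → EuclideanSpace ℝ (Fin n) → ℝ)
    (hg : ∀ i, Differentiable ℝ (g i)) (hh : ∀ j, Differentiable ℝ (h j))
    (x : EuclideanSpace ℝ (Fin n))
    (hxg : ∀ i, g i x ≤ 0) (hxh : ∀ j, h j x = 0) :
    (∃ y : EuclideanSpace ℝ (Fin n),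
        (∀ j, ⟪y, gradient (h j) x⟫ = 0) ∧
        ∀ i, g i x = 0 → ⟪y, gradient (g i) x⟫ < 0) ↔
      convexHull ℝ ((fun i => gradient (g i) x) '' {i | g i x = 0}) ∩
        (Submodule.span ℝ (Set.range fun j => gradient (h j) x) :
          Set (EuclideanSpace ℝ (Fin n))) = ∅ :=
  stmt2_general g h x
end

section
/- Let f, g₁,…,g_m : ℝⁿ → ℝ be continuous. Assume C₀ = {x | g_i(x) ≤ 0 ∀i} is nonempty and C_{μ'} is bounded for some μ' with all entries positive. Then the value function val(μ) = min{f(x) | x ∈ C_μ}, defined for μ ∈ ℝ₊^m, is continuous at 0: val(μ) → val(0) as μ → 0 with μ ∈ ℝ₊^m. -/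
/-!
Let `K = C_{μ'}`, a compact set. The value function is antitone, so only the lower bound needs
an argument. For `c < val 0` the points of `K` where `f ≤ c` form a compact set `S` disjoint from
`C₀`; the upper closure of the compact set `g(S) ⊆ ℝᵐ` is closed and misses `0`, so it also misses
every `μ` near `0`, which means `f > c` on `C_μ`.
-/

open Filter Set Topology

variable {X ι : Type*} [TopologicalSpace X] [Finite ι]

theorem eventually_forall_lt_of_isCompact {f : X → ℝ} {G : X → ι → ℝ} (hf : Continuous f)
    (hG : Continuous G) {K : Set X} (hK : IsCompact K) {y₀ : ι → ℝ} {c : ℝ}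
    (hc : ∀ x ∈ K, G x ≤ y₀ → c < f x) :
    ∀ᶠ y in 𝓝 y₀, ∀ x ∈ K, G x ≤ y → c < f x := by
  cases nonempty_fintype ι
  set S := K ∩ {x | f x ≤ c}
  have hT : IsCompact (G '' S) := (hK.inter_right (isClosed_le hf continuous_const)).image hG
  have hclosed : IsClosed (upperClosure (G '' S) : Set (ι → ℝ)) :=
    hT.isClosed.upperClosure_pi hT.isBounded.bddBelow
  have hy₀ : y₀ ∉ (upperClosure (G '' S) : Set (ι → ℝ)) := by
    rintro ⟨_, ⟨x, ⟨hxK, hfx⟩, rfl⟩, hle⟩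
    exact (hc x hxK hle).not_ge hfx
  filter_upwards [hclosed.isOpen_compl.mem_nhds hy₀] with y hy x hxK hxy
  by_contra! hfx
  exact hy ⟨G x, ⟨x, ⟨hxK, hfx⟩, rfl⟩, hxy⟩

theorem tendsto_sInf_image_preimage_Iic {f : X → ℝ} {G : X → ι → ℝ} (hf : Continuous f)
    (hG : Continuous G) {y₀ y₁ : ι → ℝ} (hy₁ : Iic y₁ ∈ 𝓝 y₀) (hK : IsCompact (G ⁻¹' Iic y₁))
    (hne : (G ⁻¹' Iic y₀).Nonempty) :
    Tendsto (fun y => sInf (f '' (G ⁻¹' Iic y))) (𝓝[Ici y₀] y₀)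
      (𝓝 (sInf (f '' (G ⁻¹' Iic y₀)))) := by
  have hbdd : ∀ y ≤ y₁, BddBelow (f '' (G ⁻¹' Iic y)) := fun y hy =>
    (hK.image hf).bddBelow.mono (image_mono (preimage_mono (Iic_subset_Iic.2 hy)))
  have hnear : ∀ᶠ y in 𝓝[Ici y₀] y₀, y₀ ≤ y ∧ y ≤ y₁ :=
    eventually_mem_nhdsWithin.and (nhdsWithin_le_nhds hy₁)
  have hmono : ∀ {y y'}, y ≤ y' → G ⁻¹' Iic y ⊆ G ⁻¹' Iic y' := fun h =>
    preimage_mono (Iic_subset_Iic.2 h)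
  rw [tendsto_order]
  constructor
  · intro a ha
    obtain ⟨c, hac, hcv⟩ := exists_between ha
    have hc : ∀ x ∈ G ⁻¹' Iic y₁, G x ≤ y₀ → c < f x := fun x _ hx =>
      hcv.trans_le (csInf_le (hbdd y₀ (mem_of_mem_nhds hy₁)) (mem_image_of_mem f hx))
    filter_upwards [nhdsWithin_le_nhds (eventually_forall_lt_of_isCompact hf hG hK hc), hnear]
      with y hy ⟨h₀, h₁⟩
    refine hac.trans_le (le_csInf ((hne.mono (hmono h₀)).image f) ?_)
    exact forall_mem_image.2 fun x hx => (hy x (hmono h₁ hx) hx).le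
  · intro a ha
    filter_upwards [hnear] with y ⟨h₀, h₁⟩
    exact (csInf_le_csInf (hbdd y h₁) (hne.image f) (image_mono (hmono h₀))).trans_lt ha

theorem stmt6 {n m : ℕ} (f : (Fin n → ℝ) → ℝ) (g : Fin m → (Fin n → ℝ) → ℝ)
    (hf : Continuous f) (hg : ∀ i, Continuous (g i))
    (hC0 : {x : Fin n → ℝ | ∀ i, g i x ≤ 0}.Nonempty)
    (μ' : Fin m → ℝ) (hμ' : ∀ i, 0 < μ' i)
    (hbdd : Bornology.IsBounded {x : Fin n → ℝ | ∀ i, g i x ≤ μ' i}) :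
    Tendsto (fun μ : Fin m → ℝ => sInf (f '' {x | ∀ i, g i x ≤ μ i}))
      (nhdsWithin 0 {μ : Fin m → ℝ | ∀ i, 0 ≤ μ i})
      (nhds (sInf (f '' {x | ∀ i, g i x ≤ 0}))) := by
  have hG : Continuous fun x i => g i x := continuous_pi hg
  have hIic : Iic μ' ∈ 𝓝 (0 : Fin m → ℝ) := by
    rw [← pi_univ_Iic]
    exact set_pi_mem_nhds finite_univ fun i _ => Iic_mem_nhds (hμ' i)
  have hK : IsCompact {x : Fin n → ℝ | ∀ i, g i x ≤ μ' i} :=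
    Metric.isCompact_of_isClosed_isBounded (isClosed_le hG continuous_const) hbdd
  exact tendsto_sInf_image_preimage_Iic hf hG hIic hK hC0
end

section
/- In ℝ², let g(x₁,x₂) = x₂ and h(x₁,x₂) = x₂ - x₁². For every μ ∈ ℝ, the set [g ≤ μ] ∩ [h = μ] = {(0,μ)}, and MFCQ fails at (0,μ) since the inequality constraint is active and ∇g(0,μ) = ∇h(0,μ) = (0,1), so conv{∇g(0,μ)} ∩ span{∇h(0,μ)} ≠ ∅. -/
noncomputable def g12 : EuclideanSpace ℝ (Fin 2) → ℝ := fun x => x 1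
noncomputable def h12 : EuclideanSpace ℝ (Fin 2) → ℝ := fun x => x 1 - (x 0)^2

/-! On `[g ≤ μ] ∩ [h = μ]` we get `x₀² = x₁ - μ ≤ 0`, so the set is the single point `(0, μ)`.
There the term `x₀²` of `h` has vanishing gradient, so `∇h = ∇g = e₁`. -/

open InnerProductSpace

section Gradient

variable {F : Type*} [NormedAddCommGroup F] [InnerProductSpace ℝ F] [CompleteSpace F]
  {f g : F → ℝ} {f' g' x : F}

theorem HasGradientAt.sub (hf : HasGradientAt f f' x) (hg : HasGradientAt g g' x) :
    HasGradientAt (fun y => f y - g y) (f' - g') x := by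
  rw [hasGradientAt_iff_hasFDerivAt, map_sub]
  exact hf.hasFDerivAt.sub hg.hasFDerivAt

theorem HasGradientAt.pow (hf : HasGradientAt f f' x) (n : ℕ) :
    HasGradientAt (fun y => f y ^ n) ((n * f x ^ (n - 1)) • f') x := by
  rw [hasGradientAt_iff_hasFDerivAt, map_smulₛₗ]
  exact hf.hasFDerivAt.pow n |>.congr_fderiv (by simp)

end Gradient

theorem EuclideanSpace.hasGradientAt_apply {ι : Type*} [Fintype ι] [DecidableEq ι] (i : ι)
    (x : EuclideanSpace ℝ ι) :
    HasGradientAt (fun y : EuclideanSpace ℝ ι => y i) (EuclideanSpace.single i 1) x := by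
  rw [hasGradientAt_iff_hasFDerivAt]
  exact (EuclideanSpace.proj (𝕜 := ℝ) i).hasFDerivAt.congr_fderiv <| by
    ext y
    simp [toDual_apply_apply, EuclideanSpace.inner_single_left]

theorem gradient_g12 (x : EuclideanSpace ℝ (Fin 2)) :
    gradient g12 x = EuclideanSpace.single 1 1 :=
  (EuclideanSpace.hasGradientAt_apply 1 x).gradient

theorem hasGradientAt_h12 (x : EuclideanSpace ℝ (Fin 2)) :
    HasGradientAt h12 (EuclideanSpace.single 1 1 - (2 * x 0) • EuclideanSpace.single 0 1) x := by
  convert (EuclideanSpace.hasGradientAt_apply 1 x).sub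
    ((EuclideanSpace.hasGradientAt_apply 0 x).pow 2) using 1
  · rfl
  · norm_num

theorem gradient_h12_single (μ : ℝ) :
    gradient h12 (EuclideanSpace.single 1 μ) = EuclideanSpace.single 1 1 := by
  simpa using (hasGradientAt_h12 (EuclideanSpace.single 1 μ)).gradient

theorem setOf_g12_le_and_h12_eq (μ : ℝ) :
    {x : EuclideanSpace ℝ (Fin 2) | g12 x ≤ μ ∧ h12 x = μ} = {EuclideanSpace.single 1 μ} := by
  ext x
  simp only [Set.mem_ofPred_eq, Set.mem_singleton_iff, g12, h12]
  constructor
  · rintro ⟨hle, heq⟩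
    have hx0 : x 0 = 0 := by nlinarith [sq_nonneg (x 0)]
    have hx1 : x 1 = μ := by nlinarith
    ext i
    fin_cases i <;> simp [hx0, hx1]
  · rintro rfl
    simp

theorem stmt12 (μ : ℝ) :
    {x : EuclideanSpace ℝ (Fin 2) | g12 x ≤ μ ∧ h12 x = μ} =
      {EuclideanSpace.single (1 : Fin 2) μ} ∧
    g12 (EuclideanSpace.single (1 : Fin 2) μ) = μ ∧
    (gradient g12 (EuclideanSpace.single (1 : Fin 2) μ)) 0 = 0 ∧
    (gradient g12 (EuclideanSpace.single (1 : Fin 2) μ)) 1 = 1 ∧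
    gradient g12 (EuclideanSpace.single (1 : Fin 2) μ) =
      gradient h12 (EuclideanSpace.single (1 : Fin 2) μ) ∧
    (convexHull ℝ {gradient g12 (EuclideanSpace.single (1 : Fin 2) μ)} ∩
      (Submodule.span ℝ {gradient h12 (EuclideanSpace.single (1 : Fin 2) μ)} :
        Set (EuclideanSpace ℝ (Fin 2)))).Nonempty := by
  have hgrad : gradient g12 (EuclideanSpace.single 1 μ) =
      gradient h12 (EuclideanSpace.single 1 μ) := by
    rw [gradient_g12, gradient_h12_single]
  refine ⟨setOf_g12_le_and_h12_eq μ, by simp [g12], by simp [gradient_g12],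
    by simp [gradient_g12], hgrad, ?_⟩
  refine ⟨gradient g12 (EuclideanSpace.single 1 μ), by simp [convexHull_singleton], ?_⟩
  rw [hgrad]
  exact Submodule.subset_span rfl
end

section
/- Let a ∈ (-1,1)ⁿ, α ∈ ℝ with α < 4n, and consider in ℝⁿ the constraints g₀(x) = 4n - ‖x - a‖² ≤ α, g_i(x) = x_i² ≤ 1 (i = 1,…,n). Let z be a feasible point with g₀ active (i.e., ‖z - a‖² = 4n - α) and active index set I ⊆ {1,…,n} (i.e., z_i = v_i ∈ {±1} for i ∈ I, |z_j| < 1 for j ∉ I, I nonempty). Then -∇g₀(z) = 2(z - a) lies in the convex cone generated by {∇g_i(z) = 2 v_i e_i | i ∈ I} if and only if z_j = a_j for every j ∉ I. -/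
/-!
Comparing coordinates, `2 (z - a) = ∑_{i ∈ I} λᵢ 2 vᵢ eᵢ` says exactly that `zⱼ = aⱼ` off `I` and
`λᵢ = vᵢ (zᵢ - aᵢ) = 1 - vᵢ aᵢ` on `I`; the latter is nonnegative because `|aᵢ| < 1 = |vᵢ|`.
-/

theorem EuclideanSpace.sum_smul_single_one_apply {ι 𝕜 : Type*} [RCLike 𝕜] [DecidableEq ι]
    (s : Finset ι) (c : ι → 𝕜) (j : ι) :
    (∑ i ∈ s, c i • EuclideanSpace.single i (1 : 𝕜)) j = if j ∈ s then c j else 0 := by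
  simp [Pi.single_apply]

theorem EuclideanSpace.eq_sum_smul_single_one_iff {ι 𝕜 : Type*} [RCLike 𝕜] [DecidableEq ι]
    (s : Finset ι) (c : ι → 𝕜) (w : EuclideanSpace 𝕜 ι) :
    w = ∑ i ∈ s, c i • EuclideanSpace.single i (1 : 𝕜) ↔
      (∀ j ∈ s, w j = c j) ∧ ∀ j ∉ s, w j = 0 := by
  simp only [PiLp.ext_iff, EuclideanSpace.sum_smul_single_one_apply]
  constructor
  · intro h
    exact ⟨fun j hj => by simpa [hj] using h j, fun j hj => by simpa [hj] using h j⟩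
  · rintro ⟨hs, hsc⟩ j
    split_ifs with hj
    exacts [hs j hj, hsc j hj]

theorem sub_mul_self_nonneg_of_abs_le {a v : ℝ} (ha : |a| ≤ 1) (hv : v = 1 ∨ v = -1) :
    0 ≤ (v - a) * v := by
  rcases hv with rfl | rfl <;> linarith [abs_le.mp ha]

theorem stmt14_general {n : ℕ} (a z : EuclideanSpace ℝ (Fin n))
    (ha : ∀ i, a i ∈ Set.Ioo (-1 : ℝ) 1)
    (I : Finset (Fin n)) (v : Fin n → ℝ)
    (hv : ∀ i ∈ I, v i = 1 ∨ v i = -1)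
    (hzI : ∀ i ∈ I, z i = v i) :
    (∃ lam : Fin n → ℝ, (∀ i, 0 ≤ lam i) ∧
        (2 : ℝ) • (z - a) =
          ∑ i ∈ I, lam i • ((2 * v i) • EuclideanSpace.single i (1 : ℝ))) ↔
      ∀ j ∉ I, z j = a j := by
  simp only [smul_smul, EuclideanSpace.eq_sum_smul_single_one_iff, PiLp.smul_apply,
    PiLp.sub_apply, smul_eq_mul]
  constructor
  · rintro ⟨lam, -, -, hout⟩ j hj
    linarith [hout j hj]
  · intro hout
    have hv_sq : ∀ i ∈ I, v i * v i = 1 := fun i hi => by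
      rcases hv i hi with h | h <;> simp [h]
    refine ⟨fun i => (z i - a i) * v i, fun i => ?_, fun j hj => ?_, fun j hj => ?_⟩
    · dsimp only
      by_cases hi : i ∈ I
      · rw [hzI i hi]
        exact sub_mul_self_nonneg_of_abs_le (abs_le.mpr ⟨(ha i).1.le, (ha i).2.le⟩) (hv i hi)
      · simp [hout i hi]
    · linear_combination (-2 * (z j - a j)) * hv_sq j hj
    · simp [hout j hj]

theorem stmt14 {n : ℕ} (a z : EuclideanSpace ℝ (Fin n)) (α : ℝ)
    (ha : ∀ i, a i ∈ Set.Ioo (-1 : ℝ) 1)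
    (hα : α < 4 * n)
    (hfeas : ∀ i, (z i)^2 ≤ 1)
    (hactive : ‖z - a‖^2 = 4 * n - α)
    (I : Finset (Fin n)) (hI : I.Nonempty) (v : Fin n → ℝ)
    (hv : ∀ i ∈ I, v i = 1 ∨ v i = -1)
    (hzI : ∀ i ∈ I, z i = v i)
    (hzJ : ∀ j ∉ I, |z j| < 1) :
    (∃ lam : Fin n → ℝ, (∀ i, 0 ≤ lam i) ∧
        (2 : ℝ) • (z - a) =
          ∑ i ∈ I, lam i • ((2 * v i) • EuclideanSpace.single i (1 : ℝ))) ↔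
      ∀ j ∉ I, z j = a j :=
  stmt14_general a z ha I v hv hzI
end
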